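/- Let α = 1/2. Let u₀ : ℝ → ℝ be C¹ and 2π-periodic, and suppose there exist points x₁ < x₂ with u₀(x₁) > u₀(x₂) > 0. Set T₊ := exp( (x₂ − x₁ + m(u₀(x₁))) / (u₀(x₁) − u₀(x₂)) ), where m(y) := |2y·log(2·y^{−2}·(√(y² + 1) − 1))|. Then there is no C¹ function u : [1,T] × ℝ → ℝ, 2π-periodic in x, with u(1,·) = u₀, satisfying the dust equation on [1,T] × ℝ for any T ≥ T₊. In other words, every C¹ solution launched by such initial data breaks down by the finite time T₊. -/

import Mathlib

/-- The dust equation `∂ₜu + (√(t^{2α}u² + 1))⁻¹·u·∂ₓu = −2α·t⁻¹·u` holding for all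
times `t` in the set `s` (and all `x`). -/
def IsDustSolutionOn (α : ℝ) (s : Set ℝ) (u : ℝ → ℝ → ℝ) : Prop :=
  ∀ t ∈ s, ∀ x : ℝ,
    deriv (fun s' => u s' x) t
      + (Real.sqrt (t ^ (2 * α) * (u t x) ^ 2 + 1))⁻¹ * u t x * deriv (u t) x
      = -(2 * α) * t⁻¹ * u t x

/-- The deficit `m(y) = |2y·log(2·y^{−2}·(√(y²+1) − 1))|`. -/
noncomputable def mDeficit (y : ℝ) : ℝ :=
  |2 * y * Real.log (2 / y ^ 2 * (Real.sqrt (y ^ 2 + 1) - 1))|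

noncomputable def psiC (b t : ℝ) : ℝ := 2 * b * Real.log (Real.sqrt t + Real.sqrt (t + b ^ 2))

lemma psiC_hasDerivAt (b : ℝ) {t : ℝ} (ht : 0 < t) :
    HasDerivAt (psiC b) (b / (Real.sqrt t * Real.sqrt (t + b ^ 2))) t := by
  have h1 : 0 < t + b ^ 2 := by positivity
  have hst : 0 < Real.sqrt t := Real.sqrt_pos.2 ht
  have hs2 : 0 < Real.sqrt (t + b ^ 2) := Real.sqrt_pos.2 h1
  have d1 : HasDerivAt Real.sqrt (1 / (2 * Real.sqrt t)) t := Real.hasDerivAt_sqrt ht.ne'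
  have d2 : HasDerivAt (fun s => Real.sqrt (s + b ^ 2)) (1 / (2 * Real.sqrt (t + b ^ 2))) t := by
    have := (Real.hasDerivAt_sqrt h1.ne').comp t ((hasDerivAt_id t).add_const (b ^ 2))
    simpa [Function.comp_def] using this
  have hne : Real.sqrt t + Real.sqrt (t + b ^ 2) ≠ 0 := by positivity
  have dlog := ((d1.add d2).log hne).const_mul (2 * b)
  have dlog' : HasDerivAt (psiC b)
      (2 * b * ((1 / (2 * Real.sqrt t) + 1 / (2 * Real.sqrt (t + b ^ 2))) / (Real.sqrt t + Real.sqrt (t + b ^ 2)))) t := dlog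
  convert dlog' using 1
  field_simp
  ring

lemma mDeficit_nonneg (b : ℝ) : 0 ≤ mDeficit b := abs_nonneg _

lemma mDeficit_eq {b : ℝ} (hb : 0 < b) :
    mDeficit b = 2 * b * Real.log (1 + Real.sqrt (1 + b ^ 2)) - 2 * b * Real.log 2 := by
  have h1 : 0 < 1 + b ^ 2 := by positivity
  have hs : Real.sqrt (b ^ 2 + 1) = Real.sqrt (1 + b ^ 2) := by ring_nf
  have hsq : Real.sqrt (1 + b ^ 2) ^ 2 = 1 + b ^ 2 := Real.sq_sqrt h1.le
  have hs1 : 1 ≤ Real.sqrt (1 + b ^ 2) := by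
    nlinarith [Real.sqrt_nonneg (1 + b ^ 2)]
  have harg : 2 / b ^ 2 * (Real.sqrt (b ^ 2 + 1) - 1) = 2 / (1 + Real.sqrt (1 + b ^ 2)) := by
    rw [hs]
    have hb2 : b ^ 2 ≠ 0 := by positivity
    have : (Real.sqrt (1 + b ^ 2) - 1) * (Real.sqrt (1 + b ^ 2) + 1) = b ^ 2 := by nlinarith
    field_simp
    nlinarith
  rw [mDeficit, harg]
  have hpos : 0 < 1 + Real.sqrt (1 + b ^ 2) := by linarith
  rw [Real.log_div (by norm_num) hpos.ne']
  have hlog : Real.log 2 ≤ Real.log (1 + Real.sqrt (1 + b ^ 2)) :=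
    Real.log_le_log (by norm_num) (by linarith)
  rw [abs_of_nonpos (by nlinarith)]
  ring

lemma crossing (b c T x₁ x₂ : ℝ) (hc : 0 < c) (hbc : c < b) (hx : x₁ < x₂)
    (hT : Real.exp ((x₂ - x₁ + mDeficit b) / (b - c)) ≤ T) :
    (1 < T) ∧ (x₂ + (psiC c T - psiC c 1) ≤ x₁ + (psiC b T - psiC b 1)) := by
  have hb : 0 < b := hc.trans hbc
  have hnum : 0 < x₂ - x₁ + mDeficit b := by
    have := mDeficit_nonneg b; linarith
  have hden : 0 < b - c := by linarith
  have hT1 : 1 < T := by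
    have : (1 : ℝ) = Real.exp 0 := by simp
    rw [this] at *
    calc Real.exp 0 < Real.exp ((x₂ - x₁ + mDeficit b) / (b - c)) :=
          Real.exp_lt_exp.2 (by positivity)
      _ ≤ T := hT
  have hT0 : 0 < T := by linarith
  have hlogT : (x₂ - x₁ + mDeficit b) / (b - c) ≤ Real.log T :=
    (Real.le_log_iff_exp_le hT0).2 hT
  have hkey : x₂ - x₁ + mDeficit b ≤ (b - c) * Real.log T := by
    rw [div_le_iff₀ hden] at hlogT; linarith
  have hsT : 0 < Real.sqrt T := Real.sqrt_pos.2 hT0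
  have hlogsT : Real.log (Real.sqrt T) = Real.log T / 2 := Real.log_sqrt hT0.le
  -- key1 : b * log T - mDeficit b ≤ psiC b T - psiC b 1
  have hpsib1 : psiC b 1 = mDeficit b + 2 * b * Real.log 2 := by
    rw [psiC, mDeficit_eq hb, Real.sqrt_one]
    ring
  have key1 : b * Real.log T - mDeficit b ≤ psiC b T - psiC b 1 := by
    have hmono : Real.log (2 * Real.sqrt T) ≤ Real.log (Real.sqrt T + Real.sqrt (T + b ^ 2)) := by
      apply Real.log_le_log (by positivity)
      have : Real.sqrt T ≤ Real.sqrt (T + b ^ 2) := Real.sqrt_le_sqrt (by nlinarith)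
      linarith
    rw [Real.log_mul (by norm_num) hsT.ne', hlogsT] at hmono
    rw [hpsib1, psiC]
    nlinarith [hmono]
  -- key2 : psiC c T - psiC c 1 ≤ c * log T
  have key2 : psiC c T - psiC c 1 ≤ c * Real.log T := by
    have h1c : 0 < 1 + c ^ 2 := by positivity
    have hmul : Real.sqrt T * Real.sqrt (1 + c ^ 2) = Real.sqrt (T + T * c ^ 2) := by
      rw [← Real.sqrt_mul hT0.le]; ring_nf
    have hub : Real.sqrt (T + c ^ 2) ≤ Real.sqrt (T + T * c ^ 2) :=
      Real.sqrt_le_sqrt (by nlinarith)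
    have hmono : Real.log (Real.sqrt T + Real.sqrt (T + c ^ 2))
        ≤ Real.log (Real.sqrt T * (1 + Real.sqrt (1 + c ^ 2))) := by
      apply Real.log_le_log (by positivity)
      have hs2 : 0 ≤ Real.sqrt (1 + c ^ 2) := Real.sqrt_nonneg _
      nlinarith [hmul, hub]
    have hpos2 : (0:ℝ) < 1 + Real.sqrt (1 + c ^ 2) := by positivity
    rw [Real.log_mul hsT.ne' hpos2.ne', hlogsT] at hmono
    rw [psiC, psiC, Real.sqrt_one]
    nlinarith [hmono]
  exact ⟨hT1, by nlinarith [key1, key2, hkey]⟩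

lemma slope_eq {b t : ℝ} (ht : 0 < t) :
    (Real.sqrt (t * (b / t) ^ 2 + 1))⁻¹ * (b / t)
      = b / (Real.sqrt t * Real.sqrt (t + b ^ 2)) := by
  have hst : (0:ℝ) < Real.sqrt t := Real.sqrt_pos.2 ht
  have hstb : (0:ℝ) < Real.sqrt (t + b ^ 2) := Real.sqrt_pos.2 (by positivity)
  have harg : t * (b / t) ^ 2 + 1 = (t + b ^ 2) / t := by field_simp; ring
  have htss : Real.sqrt t * Real.sqrt t = t := Real.mul_self_sqrt ht.le
  rw [harg, Real.sqrt_div (by positivity : (0:ℝ) ≤ t + b ^ 2), inv_div]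
  field_simp
  linear_combination b * htss

open Set Filter Topology

lemma char_exists (T : ℝ) (hT1 : 1 < T) (u : ℝ → ℝ → ℝ)
    (hC : ContDiffOn ℝ 1 (fun p : ℝ × ℝ => u p.1 p.2) (Set.Icc 1 T ×ˢ Set.univ))
    (hper : ∀ t x, u t (x + 2 * Real.pi) = u t x)
    (hpde : IsDustSolutionOn (1 / 2) (Set.Icc 1 T) u)
    (x₀ : ℝ) :
    ∃ X : ℝ → ℝ, X 1 = x₀ ∧ ContinuousOn X (Set.Icc 1 T) ∧
      (∀ t ∈ Set.Icc 1 T, u t (X t) = u 1 x₀ / t) ∧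
      (∀ t ∈ Set.Icc 1 T, X t = x₀ + psiC (u 1 x₀) t - psiC (u 1 x₀) 1) := by
  set S : Set (ℝ × ℝ) := Set.Icc 1 T ×ˢ Set.univ with hS
  set F : ℝ × ℝ → ℝ := fun p => u p.1 p.2 with hF
  have hUD : UniqueDiffOn ℝ S := (uniqueDiffOn_Icc hT1).prod uniqueDiffOn_univ
  set D : ℝ × ℝ → (ℝ × ℝ) →L[ℝ] ℝ := fun p => fderivWithin ℝ F S p with hD
  have hFd : ∀ p ∈ S, HasFDerivWithinAt F (D p) S p := fun p hp =>
    ((hC p hp).differentiableWithinAt one_ne_zero).hasFDerivWithinAt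
  -- partial derivative in x
  have hpx : ∀ t ∈ Set.Icc (1:ℝ) T, ∀ x : ℝ, HasDerivAt (u t) (D (t, x) (0, 1)) x := by
    intro t ht x
    have hι : HasDerivAt (fun y : ℝ => ((t : ℝ), y)) ((0 : ℝ), (1 : ℝ)) x :=
      (hasDerivAt_const x t).prodMk (hasDerivAt_id x)
    have hmem : ((t, x) : ℝ × ℝ) ∈ S := ⟨ht, trivial⟩
    have := (hFd _ hmem).comp_hasDerivWithinAt x (hι.hasDerivWithinAt (s := Set.univ))
      (fun y _ => (⟨ht, trivial⟩ : ((t, y) : ℝ × ℝ) ∈ S))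
    rw [hasDerivWithinAt_univ] at this
    exact this
  -- partial derivative in t, within Icc
  have hpt : ∀ t ∈ Set.Icc (1:ℝ) T, ∀ x : ℝ,
      HasDerivWithinAt (fun s => u s x) (D (t, x) (1, 0)) (Set.Icc 1 T) t := by
    intro t ht x
    have hι : HasDerivAt (fun s : ℝ => (s, (x : ℝ))) ((1 : ℝ), (0 : ℝ)) t :=
      (hasDerivAt_id t).prodMk (hasDerivAt_const t x)
    have hmem : ((t, x) : ℝ × ℝ) ∈ S := ⟨ht, trivial⟩
    exact (hFd _ hmem).comp_hasDerivWithinAt t (hι.hasDerivWithinAt)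
      (fun s hs => (⟨hs, trivial⟩ : ((s, x) : ℝ × ℝ) ∈ S))
  -- PDE at interior points
  have hpde' : ∀ t ∈ Set.Ioo (1:ℝ) T, ∀ x : ℝ,
      D (t, x) (1, 0) = -(t⁻¹ * u t x)
        - (Real.sqrt (t * (u t x) ^ 2 + 1))⁻¹ * u t x * D (t, x) (0, 1) := by
    intro t ht x
    have h1 := hpde t (Set.Ioo_subset_Icc_self ht) x
    have ht0 : (0:ℝ) < t := lt_trans one_pos ht.1
    have e1 : deriv (fun s' => u s' x) t = D (t, x) (1, 0) :=
      ((hpt t (Set.Ioo_subset_Icc_self ht) x).hasDerivAt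
        (Icc_mem_nhds ht.1 ht.2)).deriv
    have e2 : deriv (u t) x = D (t, x) (0, 1) :=
      (hpx t (Set.Ioo_subset_Icc_self ht) x).deriv
    have hrpow : t ^ (2 * (1/2 : ℝ)) = t := by
      norm_num
    rw [e1, e2, hrpow] at h1
    have : -(2 * (1/2 : ℝ)) * t⁻¹ * u t x = -(t⁻¹ * u t x) := by ring
    rw [this] at h1
    linarith
  -- bound on the x-derivative
  have hDcont : ContinuousOn D S := hC.continuousOn_fderivWithin hUD le_rfl
  obtain ⟨M, hM⟩ : ∃ M : ℝ, ∀ p ∈ Set.Icc (1:ℝ) T ×ˢ Set.Icc (0:ℝ) (2 * Real.pi), ‖D p‖ ≤ M := by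
    have hK : IsCompact (Set.Icc (1:ℝ) T ×ˢ Set.Icc (0:ℝ) (2 * Real.pi)) :=
      isCompact_Icc.prod isCompact_Icc
    have hKS : (Set.Icc (1:ℝ) T ×ˢ Set.Icc (0:ℝ) (2 * Real.pi)) ⊆ S :=
      Set.prod_mono subset_rfl (Set.subset_univ _)
    exact hK.exists_bound_of_continuousOn (hDcont.mono hKS)
  have hMd : ∀ t ∈ Set.Icc (1:ℝ) T, ∀ x : ℝ, |deriv (u t) x| ≤ M := by
    intro t ht x
    have hperd : Function.Periodic (deriv (u t)) (2 * Real.pi) := by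
      intro y
      have hfun : (fun z => u t (z + 2 * Real.pi)) = u t := funext fun z => hper t z
      calc deriv (u t) (y + 2 * Real.pi) = deriv (fun z => u t (z + 2 * Real.pi)) y := by
            rw [deriv_comp_add_const]
        _ = deriv (u t) y := by rw [hfun]
    obtain ⟨y, hy, hxy⟩ := hperd.exists_mem_Ico₀ Real.two_pi_pos x
    rw [hxy, (hpx t ht y).deriv]
    calc |D (t, y) (0, 1)| ≤ ‖D (t, y)‖ * ‖((0 : ℝ), (1 : ℝ))‖ :=
          (D (t, y)).le_opNorm _
      _ ≤ M * 1 := by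
          apply mul_le_mul (hM (t, y) ⟨ht, Set.Ico_subset_Icc_self hy⟩) ?_ (norm_nonneg _)
            ((norm_nonneg _).trans (hM (t, y) ⟨ht, Set.Ico_subset_Icc_self hy⟩))
          rw [Prod.norm_def]
          simp
      _ = M := mul_one M
  -- Lipschitz bound for u t
  have hLip : ∀ t ∈ Set.Icc (1:ℝ) T, LipschitzWith (Real.toNNReal M) (u t) := by
    intro t ht
    apply lipschitzWith_of_nnnorm_deriv_le (fun x => (hpx t ht x).differentiableAt)
    intro x
    rw [← NNReal.coe_le_coe, coe_nnnorm, Real.norm_eq_abs, Real.coe_toNNReal']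
    exact (hMd t ht x).trans (le_max_left _ _)
  -- the slope function and its properties
  set v : ℝ → ℝ → ℝ := fun t x => (Real.sqrt (t * (u t x) ^ 2 + 1))⁻¹ * u t x with hv
  have hsq : ∀ t : ℝ, 1 ≤ t → ∀ w : ℝ, 1 ≤ Real.sqrt (t * w ^ 2 + 1) := by
    intro t ht w
    nlinarith [Real.sq_sqrt (show (0:ℝ) ≤ t * w ^ 2 + 1 by nlinarith),
      Real.sqrt_nonneg (t * w ^ 2 + 1)]
  -- φ t is 1-Lipschitz
  have hphiLip : ∀ t ∈ Set.Icc (1:ℝ) T,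
      LipschitzWith 1 (fun w : ℝ => (Real.sqrt (t * w ^ 2 + 1))⁻¹ * w) := by
    intro t ht
    have hphiD : ∀ w : ℝ, HasDerivAt (fun w : ℝ => (Real.sqrt (t * w ^ 2 + 1))⁻¹ * w)
        ((Real.sqrt (t * w ^ 2 + 1))⁻¹ ^ 3) w := by
      intro w
      have hq : (0:ℝ) < t * w ^ 2 + 1 := by nlinarith [ht.1]
      have hs1 : 1 ≤ Real.sqrt (t * w ^ 2 + 1) := hsq t ht.1 w
      have hs0 : (0:ℝ) < Real.sqrt (t * w ^ 2 + 1) := lt_of_lt_of_le one_pos hs1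
      have hss : Real.sqrt (t * w ^ 2 + 1) ^ 2 = t * w ^ 2 + 1 := Real.sq_sqrt hq.le
      have dq : HasDerivAt (fun w : ℝ => t * w ^ 2 + 1) (t * (2 * w)) w := by
        simpa using ((hasDerivAt_pow 2 w).const_mul t).add_const 1
      have ds := dq.sqrt hq.ne'
      have dinv := ds.inv hs0.ne'
      have := dinv.mul (hasDerivAt_id w)
      refine this.congr_deriv ?_
      symm
      simp only [id, Pi.inv_apply]
      field_simp
      nlinarith [hss]
    apply lipschitzWith_of_nnnorm_deriv_le (fun w => (hphiD w).differentiableAt)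
    intro w
    rw [(hphiD w).deriv, ← NNReal.coe_le_coe, coe_nnnorm, Real.norm_eq_abs]
    have hs1 : 1 ≤ Real.sqrt (t * w ^ 2 + 1) := hsq t ht.1 w
    rw [abs_of_nonneg (by positivity)]
    simp only [NNReal.coe_one]
    calc (Real.sqrt (t * w ^ 2 + 1))⁻¹ ^ 3 ≤ 1 ^ 3 := by
          apply pow_le_pow_left₀ (by positivity)
          rw [inv_le_one_iff₀]; right; exact hs1
      _ = 1 := one_pow 3
  have hlv : ∀ t ∈ Set.Icc (1:ℝ) T, LipschitzWith (Real.toNNReal M) (v t) := by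
    intro t ht
    have := (hphiLip t ht).comp (hLip t ht)
    rw [one_mul] at this
    exact this
  have hcu : ∀ x : ℝ, ContinuousOn (fun t => u t x) (Set.Icc 1 T) := by
    intro x
    have : ContinuousOn (fun t : ℝ => F (t, x)) (Set.Icc 1 T) := by
      apply hC.continuousOn.comp (Continuous.continuousOn (continuous_id.prodMk continuous_const))
      intro s hs; exact ⟨hs, trivial⟩
    exact this
  have hcv : ∀ x : ℝ, ContinuousOn (fun t => v t x) (Set.Icc 1 T) := by
    intro x
    apply ContinuousOn.mul ?_ (hcu x)
    apply ContinuousOn.inv₀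
    · exact (Real.continuous_sqrt.comp_continuousOn
        ((continuousOn_id.mul ((hcu x).pow 2)).add continuousOn_const))
    · intro t ht
      exact ne_of_gt (lt_of_lt_of_le one_pos (hsq t ht.1 (u t x)))
  have hbv : ∀ t ∈ Set.Icc (1:ℝ) T, ∀ x : ℝ, ‖v t x‖ ≤ 1 := by
    intro t ht x
    rw [Real.norm_eq_abs, hv, abs_mul, abs_inv]
    have hs1 : 1 ≤ Real.sqrt (t * (u t x) ^ 2 + 1) := hsq t ht.1 (u t x)
    have habs : |u t x| ≤ Real.sqrt (t * (u t x) ^ 2 + 1) := by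
      rw [← Real.sqrt_sq_eq_abs]
      apply Real.sqrt_le_sqrt
      nlinarith [ht.1]
    rw [abs_of_nonneg (Real.sqrt_nonneg _)]
    rw [inv_mul_le_iff₀ (lt_of_lt_of_le one_pos hs1), mul_one]
    exact habs
  -- Picard-Lindelöf
  have hPL : IsPicardLindelof v (tmin := 1) (tmax := T) ⟨1, le_refl 1, hT1.le⟩ x₀
      (Real.toNNReal (T - 1)) 0 1 (Real.toNNReal M) :=
    { lipschitzOnWith := fun t ht => (hlv t ht).lipschitzOnWith
      continuousOn := fun x _ => hcv x
      norm_le := fun t ht x _ => hbv t ht x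
      mul_max_le := by
        show ((1:NNReal):ℝ) * max (T - 1) (1 - 1) ≤ ((Real.toNNReal (T - 1)) : ℝ) - ((0:NNReal):ℝ)
        rw [NNReal.coe_one, one_mul, NNReal.coe_zero, sub_zero, Real.coe_toNNReal _ (by linarith),
          max_eq_left (by linarith : (1:ℝ) - 1 ≤ T - 1)] }
  obtain ⟨X, hX1, hXd⟩ := hPL.exists_eq_forall_mem_Icc_hasDerivWithinAt₀
  replace hX1 : X 1 = x₀ := hX1
  have hXc : ContinuousOn X (Set.Icc 1 T) := fun t ht => (hXd t ht).continuousWithinAt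
  -- derivative of g = u t (X t)
  set g : ℝ → ℝ := fun t => u t (X t) with hg
  have hgd : ∀ t ∈ Set.Icc (1:ℝ) T,
      HasDerivWithinAt g (D (t, X t) (1, v t (X t))) (Set.Icc 1 T) t := by
    intro t ht
    have hp : HasDerivWithinAt (fun s => ((s : ℝ), X s)) ((1 : ℝ), v t (X t)) (Set.Icc 1 T) t :=
      (hasDerivWithinAt_id t _).prodMk (hXd t ht)
    exact (hFd (t, X t) ⟨ht, trivial⟩).comp_hasDerivWithinAt t hp
      (fun s hs => (⟨hs, trivial⟩ : ((s, X s) : ℝ × ℝ) ∈ S))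
  have hgc : ContinuousOn g (Set.Icc 1 T) := fun t ht => (hgd t ht).continuousWithinAt
  -- the conserved quantity f t = t * g t
  have hf0 : ∀ t ∈ Set.Ioo (1:ℝ) T, HasDerivAt (fun s => s * g s) 0 t := by
    intro t ht
    have ht0 : (0:ℝ) < t := lt_trans one_pos ht.1
    have hgt : HasDerivAt g (D (t, X t) (1, v t (X t))) t :=
      (hgd t (Set.Ioo_subset_Icc_self ht)).hasDerivAt (Icc_mem_nhds ht.1 ht.2)
    have hsplit : D (t, X t) (1, v t (X t)) = D (t, X t) (1, 0)
        + v t (X t) * D (t, X t) (0, 1) := by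
      have : ((1 : ℝ), v t (X t)) = ((1 : ℝ), (0 : ℝ)) + v t (X t) • ((0 : ℝ), (1 : ℝ)) := by
        simp [Prod.ext_iff]
      rw [this, map_add, map_smul]
      simp
    have hval : D (t, X t) (1, v t (X t)) = -(t⁻¹ * g t) := by
      rw [hsplit, hpde' t ht (X t)]
      simp only [hv, hg]
      ring
    have := (hasDerivAt_id t).mul hgt
    rw [hval] at this
    refine this.congr_deriv ?_
    simp only [id]
    rw [mul_neg, ← mul_assoc, mul_inv_cancel₀ ht0.ne']
    ring
  have hconst : ∀ t ∈ Set.Icc (1:ℝ) T, t * g t = g 1 := by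
    have hfT : ∀ a ∈ Set.Ioc (1:ℝ) T, a * g a = T * g T := by
      intro a ha
      have h := constant_of_has_deriv_right_zero
        (f := fun s => s * g s) (a := a) (b := T)
        ((continuousOn_id.mul (hgc.mono (Set.Icc_subset_Icc ha.1.le le_rfl))))
        (fun y hy => (hf0 y ⟨lt_of_lt_of_le ha.1 hy.1, hy.2⟩).hasDerivWithinAt)
      have := h T ⟨ha.2, le_refl T⟩
      simpa using this.symm
    have h1T : (1:ℝ) * g 1 = T * g T := by
      have hc1 : ContinuousWithinAt (fun s => s * g s) (Set.Icc 1 T) 1 :=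
        (continuousOn_id.mul hgc) 1 ⟨le_refl 1, hT1.le⟩
      have h2 : Tendsto (fun s => s * g s) (𝓝[Set.Ioc 1 T] 1) (𝓝 (1 * g 1)) :=
        hc1.tendsto.mono_left (nhdsWithin_mono 1 Set.Ioc_subset_Icc_self)
      have h3 : Tendsto (fun s => s * g s) (𝓝[Set.Ioc 1 T] 1) (𝓝 (T * g T)) := by
        apply Tendsto.congr' _ (tendsto_const_nhds (α := ℝ))
        exact (eventually_mem_nhdsWithin.mono fun s hs => (hfT s hs).symm)
      have hne : (𝓝[Set.Ioc (1:ℝ) T] 1).NeBot := by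
        rw [nhdsWithin_Ioc_eq_nhdsGT hT1]
        infer_instance
      exact tendsto_nhds_unique h2 h3
    intro t ht
    rcases eq_or_lt_of_le ht.1 with h | h
    · rw [← h]; ring
    · rw [hfT t ⟨h, ht.2⟩, ← h1T]; ring
  have huval : ∀ t ∈ Set.Icc (1:ℝ) T, u t (X t) = u 1 x₀ / t := by
    intro t ht
    have ht0 : (0:ℝ) < t := lt_of_lt_of_le one_pos ht.1
    have := hconst t ht
    rw [hg] at this
    rw [eq_div_iff ht0.ne', mul_comm]
    rw [this]
    simp [hX1]
  -- the exact formula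
  set b : ℝ := u 1 x₀ with hb
  have hvval : ∀ t ∈ Set.Icc (1:ℝ) T, v t (X t) = b / (Real.sqrt t * Real.sqrt (t + b ^ 2)) := by
    intro t ht
    have ht0 : (0:ℝ) < t := lt_of_lt_of_le one_pos ht.1
    have hst : (0:ℝ) < Real.sqrt t := Real.sqrt_pos.2 ht0
    have hstb : (0:ℝ) < Real.sqrt (t + b ^ 2) := Real.sqrt_pos.2 (by positivity)
    rw [hv]
    simp only [huval t ht, ← hb]
    exact slope_eq ht0
  refine ⟨X, hX1, hXc, huval, ?_⟩
  have hYd : ∀ y ∈ Set.Ico (1:ℝ) T, HasDerivWithinAt (fun t => x₀ + psiC b t - psiC b 1)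
      (b / (Real.sqrt y * Real.sqrt (y + b ^ 2))) (Set.Ici y) y := by
    intro y hy
    have h0 : (0:ℝ) < y := lt_of_lt_of_le one_pos hy.1
    exact (((psiC_hasDerivAt b h0).const_add x₀).sub_const (psiC b 1)).hasDerivWithinAt
  have hXd' : ∀ y ∈ Set.Ico (1:ℝ) T, HasDerivWithinAt X
      (b / (Real.sqrt y * Real.sqrt (y + b ^ 2))) (Set.Ici y) y := by
    intro y hy
    have h1 := hXd y (Set.Ico_subset_Icc_self hy)
    rw [hvval y (Set.Ico_subset_Icc_self hy)] at h1
    apply h1.mono_of_mem_nhdsWithin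
    apply Filter.mem_of_superset (inter_mem_nhdsWithin (Set.Ici y) (Iic_mem_nhds hy.2))
    rintro z ⟨hz1, hz2⟩
    exact ⟨le_trans hy.1 hz1, hz2⟩
  have hYc : ContinuousOn (fun t => x₀ + psiC b t - psiC b 1) (Set.Icc 1 T) := by
    intro y hy
    exact (((psiC_hasDerivAt b (lt_of_lt_of_le one_pos hy.1)).const_add
      x₀).sub_const (psiC b 1)).continuousAt.continuousWithinAt
  have heq := eq_of_has_deriv_right_eq
    (f' := fun y => b / (Real.sqrt y * Real.sqrt (y + b ^ 2)))
    hXd' hYd hXc hYc (by rw [hX1]; ring)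
  intro t ht
  have := heq t ht
  linarith [this]

/-- Shock formation for dust with `α = 1/2`: initial data with `u₀(x₁) > u₀(x₂) > 0`,
`x₁ < x₂`, admit no `C¹` solution of the dust equation up to (or past) the time
`T₊ = exp((x₂ − x₁ + m(u₀(x₁)))/(u₀(x₁) − u₀(x₂)))`. -/
theorem dust_shock_formation_alpha_half (u₀ : ℝ → ℝ) (hu₀ : ContDiff ℝ 1 u₀)
    (hper : ∀ x, u₀ (x + 2 * Real.pi) = u₀ x)
    (x₁ x₂ : ℝ) (hx : x₁ < x₂) (h₁ : u₀ x₂ < u₀ x₁) (h₂ : 0 < u₀ x₂) :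
    ∀ T, Real.exp ((x₂ - x₁ + mDeficit (u₀ x₁)) / (u₀ x₁ - u₀ x₂)) ≤ T →
      ¬ ∃ u : ℝ → ℝ → ℝ,
          ContDiffOn ℝ 1 (fun p : ℝ × ℝ => u p.1 p.2) (Set.Icc 1 T ×ˢ Set.univ)
          ∧ (∀ t x, u t (x + 2 * Real.pi) = u t x)
          ∧ (∀ x, u 1 x = u₀ x)
          ∧ IsDustSolutionOn (1 / 2) (Set.Icc 1 T) u := by
  intro T hT
  rintro ⟨u, hC, hperu, hinit, hpde⟩
  obtain ⟨hT1, hineq⟩ := crossing (u₀ x₁) (u₀ x₂) T x₁ x₂ h₂ h₁ hx hT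
  obtain ⟨X₁, hX₁1, hX₁c, hX₁u, hX₁f⟩ := char_exists T hT1 u hC hperu hpde x₁
  obtain ⟨X₂, hX₂1, hX₂c, hX₂u, hX₂f⟩ := char_exists T hT1 u hC hperu hpde x₂
  rw [hinit x₁] at hX₁u hX₁f
  rw [hinit x₂] at hX₂u hX₂f
  have hTmem : T ∈ Set.Icc (1:ℝ) T := ⟨hT1.le, le_refl T⟩
  have hXT : 0 ≤ X₁ T - X₂ T := by
    rw [hX₁f T hTmem, hX₂f T hTmem]
    linarith [hineq]
  have hX1' : X₁ 1 - X₂ 1 = x₁ - x₂ := by rw [hX₁1, hX₂1]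
  have hmem0 : (0:ℝ) ∈ Set.Icc (X₁ 1 - X₂ 1) (X₁ T - X₂ T) := by
    constructor
    · rw [hX1']; linarith
    · exact hXT
  obtain ⟨ts, hts, hzero⟩ :=
    intermediate_value_Icc hT1.le (hX₁c.sub hX₂c) hmem0
  have htpos : (0:ℝ) < ts := lt_of_lt_of_le one_pos hts.1
  have hXeq : X₁ ts = X₂ ts := by
    have : X₁ ts - X₂ ts = 0 := hzero
    linarith
  have e1 : u ts (X₁ ts) = u₀ x₁ / ts := hX₁u ts hts
  have e2 : u ts (X₂ ts) = u₀ x₂ / ts := hX₂u ts hts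
  rw [hXeq, e2] at e1
  have : u₀ x₂ = u₀ x₁ := by
    field_simp at e1
    linarith [e1]
  linarith
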